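/- arXiv:1402.0229 — 2 statements merged into one kernel-verified Lean document; each statement's English description precedes it below -/
import Mathlib

section
/- For indeterminates x_1,…,x_n, y_1,…,y_n, t, one has ( ∏_{i,j=1}^{n} (1−t x_i y_j) / (Δ(x)_n Δ(y)_n) ) · det[ (1−t) / ((1−x_i y_j)(1−t x_i y_j)) ]_{1≤i,j≤n} = Σ_{S ⊆ {1,…,n}} (−1)^{|S|} t^{|S|(|S|+1)/2} ∏_{i∈S, j∉S} (t x_i − x_j)/(x_i − x_j) · ∏_{i∈S} ∏_{j=1}^{n} (1 − x_i y_j)/(1 − t x_i y_j) · ∏_{i,j=1}^{n} (1 − t x_i y_j)/(1 − x_i y_j), as an identity of rational functions. (The right-hand side is the Macdonald difference-operator generating series D_n(−t;0,t) applied to the Hall–Littlewood Cauchy kernel ∏_{i,j}(1−t x_i y_j)/(1−x_i y_j).) -/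
/-!
Since `(1 - t) / ((1 - a) (1 - t a)) = 1 / (1 - a) - t / (1 - t a)`, every row of the
Izergin–Korepin matrix is a row of the Cauchy matrix `[1 / (1 - xᵢ yⱼ)]` plus `-t` times the
corresponding row of the Cauchy matrix with `xᵢ` replaced by `t xᵢ`. Expanding the determinant
multilinearly in the rows gives a sum over the set `S` of rows taken from the second matrix; the
term of `S` is `(-t)^|S|` times the Cauchy determinant in `zᵢ = t xᵢ` (`i ∈ S`), `zᵢ = xᵢ`
(`i ∉ S`). By the Cauchy determinant formula `Δ(z) Δ(y) / ∏ (1 - zᵢ yⱼ)` and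
`Δ(z) = t^(|S| choose 2) ∏_{i ∈ S, j ∉ S} (t xᵢ - xⱼ) / (xᵢ - xⱼ) · Δ(x)`, it is the term of
`S` in the series.
-/

open Finset

theorem Nat.mul_add_one_div_two_eq_add_choose_two (k : ℕ) : k * (k + 1) / 2 = k + k.choose 2 := by
  have := Nat.triangle_succ k
  rw [Nat.add_sub_cancel] at this
  rw [mul_comm, this, Nat.choose_two_right, add_comm]

theorem Fin.prod_prod_Ioi_succ {M : Type*} [CommMonoid M] {n : ℕ}
    (f : Fin (n + 1) → Fin (n + 1) → M) :
    ∏ i, ∏ j ∈ Ioi i, f i j =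
      (∏ j : Fin n, f 0 j.succ) * ∏ i : Fin n, ∏ j ∈ Ioi i, f i.succ j.succ := by
  rw [Fin.prod_univ_succ, Fin.prod_Ioi_zero]
  simp_rw [Fin.prod_Ioi_succ]

theorem Matrix.det_add_eq_sum_det_piecewise {ι R : Type*} [Fintype ι] [DecidableEq ι]
    [CommRing R] (A B : Matrix ι ι R) :
    (A + B).det = ∑ S : Finset ι, Matrix.det (S.piecewise A B) :=
  Matrix.detRowAlternating.toMultilinearMap.map_add_univ A B

section Order

variable {ι M : Type*} [CommMonoid M] [Fintype ι] [LinearOrder ι] [LocallyFiniteOrderTop ι]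
  (S : Finset ι)

theorem prod_prod_Ioi_ite_mem_and_mem (a : M) :
    ∏ i, ∏ j ∈ Ioi i, (if i ∈ S ∧ j ∈ S then a else 1) = a ^ (#S).choose 2 := by
  rw [← card_product_filter_lt, ← prod_const, prod_filter, prod_product]
  simp only [ite_and, prod_ite_irrel, prod_const_one, prod_ite_mem, univ_inter, ← prod_filter]
  refine prod_congr rfl fun i _ => prod_congr ?_ fun _ _ => rfl
  ext j
  simp [and_comm]

variable {K : Type*} [Field K]

theorem prod_prod_Ioi_sub_ne_zero {x : ι → K} (hx : Function.Injective x) :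
    ∏ i, ∏ j ∈ Ioi i, (x i - x j) ≠ 0 :=
  prod_ne_zero_iff.2 fun _ _ => prod_ne_zero_iff.2 fun _ hj =>
    sub_ne_zero.2 (hx.ne (mem_Ioi.1 hj).ne)

variable [LocallyFiniteOrderBot ι]

theorem prod_prod_Ioi_ite_mem_and_notMem (g : ι → ι → M) :
    ∏ i, ∏ j ∈ Ioi i,
        ((if j ∈ S ∧ i ∉ S then g j i else 1) * if i ∈ S ∧ j ∉ S then g i j else 1) =
      ∏ i ∈ S, ∏ j ∈ Sᶜ, g i j := by
  set f : ι → ι → M := fun i j => if i ∈ S ∧ j ∉ S then g i j else 1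
  have hcompl (i : ι) : ∏ j ∈ {i}ᶜ, f j i = ∏ j, f j i := by
    rw [Fintype.prod_eq_mul_prod_compl i (f · i)]
    simp [f]
  rw [prod_prod_Ioi_mul_eq_prod_prod_off_diag f]
  simp only [hcompl, f]
  rw [prod_comm]
  simp only [ite_and, prod_ite_irrel, prod_const_one, prod_ite_mem, univ_inter, ← mem_compl]

theorem prod_prod_Ioi_sub_piecewise_mul {x : ι → K} (hx : Function.Injective x) (t : K) :
    ∏ i, ∏ j ∈ Ioi i, (S.piecewise (t * x ·) x i - S.piecewise (t * x ·) x j) =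
      t ^ (#S).choose 2 * (∏ i ∈ S, ∏ j ∈ Sᶜ, (t * x i - x j) / (x i - x j)) *
        ∏ i, ∏ j ∈ Ioi i, (x i - x j) := by
  set g : ι → ι → K := fun i j => (t * x i - x j) / (x i - x j)
  have hpair (i : ι) (j : ι) (hij : j ∈ Ioi i) :
      S.piecewise (t * x ·) x i - S.piecewise (t * x ·) x j =
        (if i ∈ S ∧ j ∈ S then t else 1) *
          ((if j ∈ S ∧ i ∉ S then g j i else 1) * if i ∈ S ∧ j ∉ S then g i j else 1) *
          (x i - x j) := by
    have hne : x i - x j ≠ 0 := sub_ne_zero.2 (hx.ne (mem_Ioi.1 hij).ne)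
    have hne' : x j - x i ≠ 0 := sub_ne_zero.2 (hx.ne (mem_Ioi.1 hij).ne')
    by_cases hi : i ∈ S <;> by_cases hj : j ∈ S <;>
      simp only [g, hi, hj, piecewise_eq_of_mem, piecewise_eq_of_notMem, not_true_eq_false,
        not_false_eq_true, and_self, and_true, and_false, ↓reduceIte, mul_one, one_mul]
    · ring
    · exact (div_mul_cancel₀ _ hne).symm
    · field_simp
      ring
  rw [prod_congr rfl fun i _ => prod_congr rfl (hpair i), ← prod_prod_Ioi_ite_mem_and_mem,
    ← prod_prod_Ioi_ite_mem_and_notMem]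
  simp only [prod_mul_distrib, g]

end Order

theorem prod_div_prod_piecewise {ι K : Type*} [Fintype ι] [DecidableEq ι] [Field K]
    {p q : ι → K} (hp : ∀ i, p i ≠ 0) (hq : ∀ i, q i ≠ 0) (S : Finset ι) :
    (∏ i, q i) / ∏ i, S.piecewise q p i = (∏ i ∈ S, p i / q i) * ∏ i, q i / p i := by
  rw [prod_piecewise, univ_inter, ← compl_eq_univ_sdiff, ← prod_mul_prod_compl S q,
    ← prod_mul_prod_compl S (fun i => q i / p i)]
  simp only [prod_div_distrib]
  have := prod_ne_zero_iff.2 fun i (_ : i ∈ S) => hp i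
  have := prod_ne_zero_iff.2 fun i (_ : i ∈ S) => hq i
  have := prod_ne_zero_iff.2 fun i (_ : i ∈ Sᶜ) => hp i
  field_simp

section Cauchy

variable {K : Type*} [Field K] {n : ℕ}

def cauchyMatrix (x y : Fin n → K) : Matrix (Fin n) (Fin n) K :=
  Matrix.of fun i j => (1 - x i * y j)⁻¹

theorem cauchy_schur_complement_entry {a a₀ b b₀ : K} (hab : 1 - a * b ≠ 0)
    (hab₀ : 1 - a * b₀ ≠ 0) (ha₀b : 1 - a₀ * b ≠ 0) :
    (1 - a * b)⁻¹ - (1 - a * b₀)⁻¹ * (1 - a₀ * b₀) * (1 - a₀ * b)⁻¹ =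
      (a₀ - a) / (1 - a * b₀) * ((b₀ - b) / (1 - a₀ * b) * (1 - a * b)⁻¹) := by
  have hba₀ : 1 - b * a₀ ≠ 0 := by rwa [mul_comm]
  field_simp
  ring

/-- Subtracting multiples of row `0` clears column `0`; the Schur complement left behind is again
a Cauchy matrix, with its rows and columns rescaled. -/
theorem det_cauchyMatrix_succ (x y : Fin (n + 1) → K) (h : ∀ i j, 1 - x i * y j ≠ 0) :
    (cauchyMatrix x y).det =
      (1 - x 0 * y 0)⁻¹ * ((∏ i : Fin n, (x 0 - x i.succ) / (1 - x i.succ * y 0)) *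
        ((∏ j : Fin n, (y 0 - y j.succ) / (1 - x 0 * y j.succ)) *
          (cauchyMatrix (Fin.tail x) (Fin.tail y)).det)) := by
  set C := cauchyMatrix x y
  set schur : Matrix (Fin (n + 1)) (Fin (n + 1)) K :=
    Matrix.of fun i j => if i = 0 then C 0 j else C i j - C i 0 * (C 0 0)⁻¹ * C 0 j
  have hC : C.det = schur.det := by
    refine Matrix.det_eq_of_forall_row_eq_smul_add_const
      (fun i => if i = 0 then 0 else C i 0 * (C 0 0)⁻¹) 0 (by simp) fun i j => ?_
    by_cases hi : i = 0 <;> simp [schur, hi]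
  rw [hC, Matrix.det_succ_column_zero, Fin.sum_univ_succ, Fintype.sum_eq_zero _ fun i => ?_]
  · have hsub : schur.submatrix Fin.succ Fin.succ = Matrix.of fun i j =>
        (x 0 - x i.succ) / (1 - x i.succ * y 0) * Matrix.of (fun i j =>
          (y 0 - y j.succ) / (1 - x 0 * y j.succ) *
            cauchyMatrix (Fin.tail x) (Fin.tail y) i j) i j := by
      ext i j
      simp [schur, C, cauchyMatrix, Fin.tail,
        cauchy_schur_complement_entry (h _ _) (h _ _) (h _ _)]
    rw [Fin.succAbove_zero, hsub, Matrix.det_mul_column, Matrix.det_mul_row]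
    simp [schur, C, cauchyMatrix]
  · have : C i.succ 0 - C i.succ 0 * (C 0 0)⁻¹ * C 0 0 = 0 := by
      simp [C, cauchyMatrix, h]
    simp [schur, this]

theorem det_cauchyMatrix (x y : Fin n → K) (h : ∀ i j, 1 - x i * y j ≠ 0) :
    (cauchyMatrix x y).det =
      (∏ i, ∏ j ∈ Ioi i, (x i - x j)) * (∏ i, ∏ j ∈ Ioi i, (y i - y j)) /
        ∏ i, ∏ j, (1 - x i * y j) := by
  induction n with
  | zero => simp
  | succ n ih =>
    rw [det_cauchyMatrix_succ x y h, ih (Fin.tail x) (Fin.tail y) fun i j => h i.succ j.succ,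
      Fin.prod_prod_Ioi_succ, Fin.prod_prod_Ioi_succ]
    simp only [Fin.prod_univ_succ, Fin.tail, prod_div_distrib]
    have := h 0 0
    have : ∏ i : Fin n, (1 - x i.succ * y 0) ≠ 0 := prod_ne_zero_iff.2 fun i _ => h _ _
    have : ∏ j : Fin n, (1 - x 0 * y j.succ) ≠ 0 := prod_ne_zero_iff.2 fun j _ => h _ _
    have : ∏ i : Fin n, ∏ j : Fin n, (1 - x i.succ * y j.succ) ≠ 0 :=
      prod_ne_zero_iff.2 fun i _ => prod_ne_zero_iff.2 fun j _ => h _ _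
    rw [prod_mul_distrib]
    field_simp

theorem det_piecewise_smul_cauchyMatrix (S : Finset (Fin n)) (c : K) (x x' y : Fin n → K) :
    Matrix.det (S.piecewise (c • cauchyMatrix x' y) (cauchyMatrix x y)) =
      c ^ #S * (cauchyMatrix (S.piecewise x' x) y).det := by
  have hrows : S.piecewise (c • cauchyMatrix x' y) (cauchyMatrix x y) =
      Matrix.of fun i j =>
        S.piecewise (fun _ => c) 1 i * cauchyMatrix (S.piecewise x' x) y i j := by
    ext i j
    by_cases hi : i ∈ S <;> simp [Finset.piecewise, hi, cauchyMatrix]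
  rw [hrows, Matrix.det_mul_column, prod_piecewise]
  simp

theorem of_one_sub_div_eq_neg_smul_cauchyMatrix_add {x y : Fin n → K} {t : K}
    (hx : ∀ i j, 1 - x i * y j ≠ 0) (htx : ∀ i j, 1 - t * (x i * y j) ≠ 0) :
    (Matrix.of fun i j => (1 - t) / ((1 - x i * y j) * (1 - t * (x i * y j)))) =
      (-t) • cauchyMatrix (t * x ·) y + cauchyMatrix x y := by
  ext i j
  have := hx i j
  have : 1 - t * x i * y j ≠ 0 := by rw [mul_assoc]; exact htx i j
  simp only [Matrix.of_apply, Matrix.add_apply, Matrix.smul_apply, cauchyMatrix, smul_eq_mul]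
  field_simp
  ring

end Cauchy

/-- The normalized Izergin–Korepin determinant equals the Macdonald difference-operator
generating series `D_n(-t;0,t)` applied to the Hall–Littlewood Cauchy kernel:
`(∏_{i,j}(1-t xᵢyⱼ) / (Δ(x)Δ(y))) · det[(1-t)/((1-xᵢyⱼ)(1-t xᵢyⱼ))]
  = Σ_{S⊆[n]} (-1)^{|S|} t^{|S|(|S|+1)/2} ∏_{i∈S,j∉S} (t xᵢ-xⱼ)/(xᵢ-xⱼ)
      · ∏_{i∈S} ∏_j (1-xᵢyⱼ)/(1-t xᵢyⱼ) · ∏_{i,j} (1-t xᵢyⱼ)/(1-xᵢyⱼ)`. -/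
theorem izergin_equals_difference_operator_series {K : Type*} [Field K] (n : ℕ)
    (x y : Fin n → K) (t : K)
    (hxinj : Function.Injective x) (hyinj : Function.Injective y)
    (h1 : ∀ i j, x i * y j ≠ 1) (h2 : ∀ i j, t * (x i * y j) ≠ 1) :
    (∏ i : Fin n, ∏ j : Fin n, (1 - t * (x i * y j))) /
        ((∏ i : Fin n, ∏ j ∈ Finset.Ioi i, (x i - x j)) *
          (∏ i : Fin n, ∏ j ∈ Finset.Ioi i, (y i - y j))) *
        (Matrix.of fun i j : Fin n =>
          (1 - t) / ((1 - x i * y j) * (1 - t * (x i * y j)))).det =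
      ∑ S : Finset (Fin n),
        (-1 : K) ^ S.card * t ^ (S.card * (S.card + 1) / 2) *
          (∏ i ∈ S, ∏ j ∈ Sᶜ, (t * x i - x j) / (x i - x j)) *
          (∏ i ∈ S, ∏ j : Fin n, (1 - x i * y j) / (1 - t * (x i * y j))) *
          ∏ i : Fin n, ∏ j : Fin n, (1 - t * (x i * y j)) / (1 - x i * y j) := by
  have hx1 (i j) : 1 - x i * y j ≠ 0 := sub_ne_zero.2 (h1 i j).symm
  have htx1 (i j) : 1 - t * (x i * y j) ≠ 0 := sub_ne_zero.2 (h2 i j).symm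
  set p : Fin n → K := fun i => ∏ j, (1 - x i * y j)
  set q : Fin n → K := fun i => ∏ j, (1 - t * (x i * y j))
  rw [of_one_sub_div_eq_neg_smul_cauchyMatrix_add hx1 htx1, Matrix.det_add_eq_sum_det_piecewise,
    mul_sum]
  refine sum_congr rfl fun S _ => ?_
  have hz (i j) : 1 - S.piecewise (t * x ·) x i * y j ≠ 0 := by
    by_cases hi : i ∈ S <;> simp [hi, hx1, htx1, mul_assoc]
  have hrows : ∏ i, ∏ j, (1 - S.piecewise (t * x ·) x i * y j) = ∏ i, S.piecewise q p i := by
    refine prod_congr rfl fun i _ => ?_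
    by_cases hi : i ∈ S <;> simp [hi, p, q, mul_assoc]
  have hkernel :
      (∏ i ∈ S, ∏ j, (1 - x i * y j) / (1 - t * (x i * y j))) *
          ∏ i, ∏ j, (1 - t * (x i * y j)) / (1 - x i * y j) =
        (∏ i, q i) / ∏ i, S.piecewise q p i := by
    rw [prod_div_prod_piecewise (fun i => prod_ne_zero_iff.2 fun j _ => hx1 i j)
      (fun i => prod_ne_zero_iff.2 fun j _ => htx1 i j)]
    simp only [prod_div_distrib]
  rw [det_piecewise_smul_cauchyMatrix, det_cauchyMatrix _ _ hz,
    prod_prod_Ioi_sub_piecewise_mul S hxinj, hrows, mul_assoc _ _ (∏ i, ∏ j, _ / _), hkernel,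
    Nat.mul_add_one_div_two_eq_add_choose_two, pow_add, neg_pow]
  have := prod_prod_Ioi_sub_ne_zero hxinj
  have := prod_prod_Ioi_sub_ne_zero hyinj
  field_simp
end

section
/- Let 0 ≤ m < n. Then det[ (1−t) / ((1−x_i y_j)(1−t x_i y_j)) ]_{1≤i,j≤n} = ∏_{m+1≤i<j≤n} (x_i − x_j) · det[ 𝒜_{i,j} ]_{1≤i,j≤n}, where 𝒜_{i,j} = (1−t)/((1−x_i y_j)(1−t x_i y_j)) for 1 ≤ i ≤ m, and 𝒜_{i,j} = Σ_{k=0}^{∞} (1−t^{k+1}) h_{k+i−n}(x_i, x_{i+1},…,x_n) y_j^k for m+1 ≤ i ≤ n, as an identity of formal power series in x_1,…,x_n, y_1,…,y_n over the field of rational functions in t. -/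
/-!
Let `U` be the matrix whose row `i < m` is the `i`-th unit row and whose row `i ≥ m` is
`(∏_{s > l} (xᵢ - xₛ))ₗ`. It is upper triangular (for `l < i` the product contains `xᵢ - xᵢ`),
with determinant `∏_{m ≤ i < j} (xᵢ - xⱼ)`, and `U 𝒜` is the left-hand matrix. Indeed, in row
`i ≥ m` the coefficient of `(1 - t^{k+1}) yⱼ^k` is
`∑_l ∏_{s > l} (xᵢ - xₛ) h_{k+l+1-n}(x_l, …, x_{n-1}) = xᵢ^k`:
this is Newton's interpolation formula for `u ^ k` at the nodes `x_{n-1}, …, x_0`, evaluated at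
`u = xᵢ`, since the divided differences of `u ^ k` are complete homogeneous polynomials,
`(u - z) h_d(u, z, L) = h_{d+1}(u, L) - h_{d+1}(z, L)`. Summing
`∑_k (1 - t^{k+1}) u^k = (1 - t) / ((1 - u)(1 - t u))` at `u = xᵢ yⱼ` gives the entries;
the series converge because `‖h_d(z)‖ ≤ 2 ^ r` when all `‖z_a‖ ≤ 1/2`.
-/

noncomputable section

open scoped BigOperators

/-- The complete homogeneous symmetric polynomial `h_k(z₁,…,z_r)`, as a sum of all
monomials of total degree `k`. -/
def hsym {R : Type*} [CommSemiring R] (r k : ℕ) (z : Fin r → R) : R :=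
  ∑ d ∈ Finset.Nat.antidiagonalTuple r k, ∏ i : Fin r, z i ^ d i

open Finset

section Algebra

variable {R : Type*} [CommRing R]

theorem hsym_zero_right (r : ℕ) (z : Fin r → R) : hsym r 0 z = 1 := by
  simp [hsym, Nat.antidiagonalTuple_zero_right]

theorem hsym_zero_succ (k : ℕ) (z : Fin 0 → R) : hsym 0 (k + 1) z = 0 := by
  simp [hsym, Nat.antidiagonalTuple_zero_succ]

theorem hsym_cast {r r' : ℕ} (h : r = r') (k : ℕ) (z : Fin r' → R) :
    hsym r k (z ∘ Fin.cast h) = hsym r' k z := by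
  subst h; rfl

theorem hsym_cons (r k : ℕ) (z : R) (w : Fin r → R) :
    hsym (r + 1) k (Fin.cons z w) = ∑ p ∈ antidiagonal k, z ^ p.1 * hsym r p.2 w := by
  simp_rw [hsym, mul_sum, sum_sigma']
  refine sum_nbij' (fun d => ⟨(d 0, k - d 0), Fin.tail d⟩) (fun q => Fin.cons q.1.1 q.2)
    ?_ ?_ ?_ ?_ ?_
  · intro d hd
    simp only [mem_sigma, Nat.mem_antidiagonalTuple, HasAntidiagonal.mem_antidiagonal,
      Fin.sum_univ_succ] at hd ⊢
    exact ⟨by omega, by simp only [Fin.tail]; omega⟩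
  · rintro ⟨⟨a, b⟩, d⟩ hq
    simp only [mem_sigma, Nat.mem_antidiagonalTuple, HasAntidiagonal.mem_antidiagonal] at hq ⊢
    rw [Fin.sum_cons]; omega
  · intro d _
    exact Fin.cons_self_tail d
  · rintro ⟨⟨a, b⟩, d⟩ hq
    simp only [mem_sigma, HasAntidiagonal.mem_antidiagonal] at hq
    simp only [Fin.cons_zero, Fin.tail_cons, Sigma.mk.injEq, Prod.mk.injEq, heq_eq_eq, true_and,
      and_true]
    omega
  · intro d _
    simp [Fin.prod_univ_succ, Fin.tail]

theorem hsym_succ_cons (r k : ℕ) (z : R) (w : Fin r → R) :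
    hsym (r + 1) (k + 1) (Fin.cons z w) =
      z * hsym (r + 1) k (Fin.cons z w) + hsym r (k + 1) w := by
  rw [hsym_cons, Nat.sum_antidiagonal_succ, hsym_cons, mul_sum]
  simp [pow_succ, mul_assoc, mul_left_comm, add_comm]

theorem hsym_one (k : ℕ) (z : Fin 1 → R) : hsym 1 k z = z 0 ^ k := by
  rw [← Fin.cons_self_tail z]
  induction k with
  | zero => simp [hsym_zero_right]
  | succ k ih => rw [hsym_succ_cons, ih, hsym_zero_succ]; simp [pow_succ, mul_comm]

theorem hsym_cons_sub_cons (r d : ℕ) (u z : R) (w : Fin r → R) :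
    hsym (r + 1) (d + 1) (Fin.cons u w) - hsym (r + 1) (d + 1) (Fin.cons z w) =
      (u - z) * hsym (r + 2) d (Fin.cons u (Fin.cons z w)) := by
  induction d with
  | zero => simp only [hsym_succ_cons, hsym_zero_right]; ring
  | succ d ih =>
    rw [hsym_succ_cons r (d + 1) u, hsym_succ_cons r (d + 1) z, hsym_succ_cons (r + 1) d u]
    linear_combination u * ih

/-- `h_{k+l+1-n}(x_l, …, x_{n-1})`, with `h_d = 0` for `d < 0`: the coefficient of `y^k` in the
row `l` of `𝒜` (indices from `0`). -/
def suffixHsym {n : ℕ} (x : Fin n → R) (k : ℕ) (l : Fin n) : R :=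
  if n ≤ k + (l : ℕ) + 1 then
    hsym (n - l) (k + l + 1 - n) (fun a : Fin (n - l) => x ⟨l + a, by have := a.isLt; omega⟩)
  else 0

theorem suffixHsym_cons_zero {n : ℕ} (z : R) (w : Fin n → R) (k : ℕ) :
    suffixHsym (Fin.cons z w : Fin (n + 1) → R) k 0 =
      if n ≤ k then hsym (n + 1) (k - n) (Fin.cons z w) else 0 := by
  simp only [suffixHsym, Fin.val_zero, add_zero, Nat.add_le_add_iff_right,
    Nat.add_sub_add_right, zero_add]
  split_ifs
  · rw [← hsym_cast (Nat.sub_zero _)]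
    rfl
  · rfl

theorem suffixHsym_cons_succ {n : ℕ} (z : R) (w : Fin n → R) (k : ℕ) (l : Fin n) :
    suffixHsym (Fin.cons z w : Fin (n + 1) → R) k l.succ = suffixHsym w k l := by
  simp only [suffixHsym, Fin.val_succ]
  by_cases h : n ≤ k + l + 1
  · rw [if_pos (by omega), if_pos h, show k + (l + 1) + 1 - (n + 1) = k + l + 1 - n by omega,
      ← hsym_cast (by omega : n + 1 - (l + 1) = n - l)]
    congr 1
    funext a
    rw [Function.comp_apply, ← Fin.cons_succ (α := fun _ => R) z w]
    congr 1
    ext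
    simp only [Fin.val_succ, Fin.val_cast]
    omega
  · rw [if_neg (by omega), if_neg h]

theorem sum_prod_sub_mul_suffixHsym (n : ℕ) (x : Fin n → R) (u : R) (k : ℕ) :
    ∑ l, (∏ s ∈ Ioi l, (u - x s)) * suffixHsym x k l +
      (∏ s, (u - x s)) * (if n ≤ k then hsym (n + 1) (k - n) (Fin.cons u x) else 0) =
        u ^ k := by
  induction n generalizing u with
  | zero => simp [hsym_one]
  | succ n ih =>
    obtain ⟨z, w, rfl⟩ : ∃ z w, x = Fin.cons z w := ⟨x 0, Fin.tail x, (Fin.cons_self_tail x).symm⟩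
    have hstep : (if n ≤ k then hsym (n + 1) (k - n) (Fin.cons z w) else 0) +
        (u - z) * (if n + 1 ≤ k then hsym (n + 2) (k - (n + 1)) (Fin.cons u (Fin.cons z w))
          else 0) = if n ≤ k then hsym (n + 1) (k - n) (Fin.cons u w) else 0 := by
      rcases lt_trichotomy k n with hk | rfl | hk
      · simp [show ¬ n ≤ k by omega, show ¬ n + 1 ≤ k by omega]
      · simp [hsym_zero_right]
      · obtain ⟨d, rfl⟩ : ∃ d, k = n + d + 1 := ⟨k - n - 1, by omega⟩
        simp only [show n ≤ n + d + 1 by omega, show n + 1 ≤ n + d + 1 by omega, if_true,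
          show n + d + 1 - n = d + 1 by omega, show n + d + 1 - (n + 1) = d by omega]
        linear_combination -hsym_cons_sub_cons n d u z w
    rw [Fin.sum_univ_succ, Fin.prod_univ_succ, Fin.prod_Ioi_zero, suffixHsym_cons_zero]
    simp only [Fin.prod_Ioi_succ, suffixHsym_cons_succ, Fin.cons_zero, Fin.cons_succ]
    linear_combination ih w u + (∏ s : Fin n, (u - w s)) * hstep

theorem sum_prod_sub_mul_suffixHsym_self {n : ℕ} (x : Fin n → R) (i : Fin n) (k : ℕ) :
    ∑ l, (∏ s ∈ Ioi l, (x i - x s)) * suffixHsym x k l = x i ^ k := by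
  have hvanish : ∏ s, (x i - x s) = 0 := prod_eq_zero (mem_univ i) (sub_self _)
  simpa [hvanish] using sum_prod_sub_mul_suffixHsym n x (x i) k

end Algebra

section Analysis

theorem norm_hsym_le_two_pow {R : Type*} [NormedCommRing R] [NormOneClass R] (r d : ℕ)
    (z : Fin r → R) (hz : ∀ a, ‖z a‖ ≤ 1 / 2) : ‖hsym r d z‖ ≤ 2 ^ r := by
  induction r generalizing d with
  | zero => cases d <;> simp [hsym_zero_right, hsym_zero_succ]
  | succ r ih =>
    rw [← Fin.cons_self_tail z]
    have hw := fun d => ih d (Fin.tail z) fun a => hz a.succ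
    induction d with
    | zero => simp [hsym_zero_right, one_le_pow₀]
    | succ d ihd =>
      rw [hsym_succ_cons]
      calc ‖z 0 * hsym (r + 1) d (Fin.cons (z 0) (Fin.tail z)) + hsym r (d + 1) (Fin.tail z)‖
          ≤ ‖z 0‖ * ‖hsym (r + 1) d (Fin.cons (z 0) (Fin.tail z))‖ +
              ‖hsym r (d + 1) (Fin.tail z)‖ :=
            (norm_add_le _ _).trans (by gcongr; exact norm_mul_le _ _)
        _ ≤ 1 / 2 * 2 ^ (r + 1) + 2 ^ r := by gcongr; exacts [hz 0, hw _]
        _ = 2 ^ (r + 1) := by ring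

variable {K : Type*} [NormedField K]

theorem norm_suffixHsym_le {n : ℕ} (x : Fin n → K) (hx : ∀ a, ‖x a‖ ≤ 1 / 2) (k : ℕ)
    (l : Fin n) : ‖suffixHsym x k l‖ ≤ 2 ^ n := by
  unfold suffixHsym
  split_ifs
  · exact (norm_hsym_le_two_pow _ _ _ fun a => hx _).trans
      (pow_le_pow_right₀ one_le_two (Nat.sub_le _ _))
  · simp

theorem hasSum_one_sub_pow_succ_mul_pow {t u : K} (hu : ‖u‖ < 1) (htu : ‖t * u‖ < 1) :
    HasSum (fun k => (1 - t ^ (k + 1)) * u ^ k) ((1 - t) / ((1 - u) * (1 - t * u))) := by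
  have hu1 : 1 - u ≠ 0 := sub_ne_zero.2 (by rintro rfl; simp at hu)
  have htu1 : 1 - t * u ≠ 0 := sub_ne_zero.2 (by intro h; simp [← h] at htu)
  have hterm : (fun k => (1 - t ^ (k + 1)) * u ^ k) = fun k => u ^ k - t * (t * u) ^ k := by
    funext k; ring
  have hsum : (1 - t) / ((1 - u) * (1 - t * u)) = (1 - u)⁻¹ - t * (1 - t * u)⁻¹ := by
    field_simp; ring
  rw [hterm, hsum]
  exact (hasSum_geometric_of_norm_lt_one hu).sub ((hasSum_geometric_of_norm_lt_one htu).mul_left t)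

variable [CompleteSpace K]

theorem summable_suffixHsym_mul_pow {n : ℕ} (x : Fin n → K) (hx : ∀ a, ‖x a‖ ≤ 1 / 2)
    {t w : K} (ht : ‖t‖ ≤ 1) (hw : ‖w‖ < 1) (l : Fin n) :
    Summable fun k => (1 - t ^ (k + 1)) * suffixHsym x k l * w ^ k := by
  refine Summable.of_norm_bounded
    ((summable_geometric_of_lt_one (norm_nonneg w) hw).mul_left (2 * 2 ^ n)) fun k => ?_
  have h1 : ‖1 - t ^ (k + 1)‖ ≤ 2 := by
    refine (norm_sub_le _ _).trans ?_
    rw [norm_one, norm_pow]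
    linarith [pow_le_one₀ (norm_nonneg t) ht (n := k + 1)]
  rw [norm_mul, norm_mul, norm_pow]
  gcongr
  exact norm_suffixHsym_le x hx k l

theorem sum_prod_sub_mul_tsum_suffixHsym {n : ℕ} (x : Fin n → K) (hx : ∀ a, ‖x a‖ ≤ 1 / 2)
    {t w : K} (ht : ‖t‖ < 1) (hw : ‖w‖ < 1) (i : Fin n) :
    ∑ l, (∏ s ∈ Ioi l, (x i - x s)) * ∑' k, (1 - t ^ (k + 1)) * suffixHsym x k l * w ^ k =
      (1 - t) / ((1 - x i * w) * (1 - t * (x i * w))) := by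
  have hxw : ‖x i * w‖ < 1 := by
    rw [norm_mul]
    nlinarith [hx i, norm_nonneg (x i), norm_nonneg w]
  have htxw : ‖t * (x i * w)‖ < 1 := by
    rw [norm_mul]
    exact mul_lt_one_of_nonneg_of_lt_one_left (norm_nonneg t) ht hxw.le
  calc _ = ∑' k, ∑ l, (∏ s ∈ Ioi l, (x i - x s)) *
        ((1 - t ^ (k + 1)) * suffixHsym x k l * w ^ k) := by
        simp_rw [← tsum_mul_left]
        exact (Summable.tsum_finsetSum fun l _ =>
          (summable_suffixHsym_mul_pow x hx ht.le hw l).mul_left _).symm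
    _ = ∑' k, (1 - t ^ (k + 1)) * (x i * w) ^ k := by
        congr 1
        funext k
        rw [mul_pow, ← sum_prod_sub_mul_suffixHsym_self x i k, sum_mul, mul_sum]
        exact sum_congr rfl fun l _ => by ring
    _ = _ := (hasSum_one_sub_pow_succ_mul_pow hxw htxw).tsum_eq

end Analysis

section RowOperations

variable {R : Type*} [CommRing R] {n : ℕ}

def rowOpMatrix (m : ℕ) (x : Fin n → R) : Matrix (Fin n) (Fin n) R :=
  Matrix.of fun i l => if (i : ℕ) < m then (1 : Matrix (Fin n) (Fin n) R) i l
    else ∏ s ∈ Ioi l, (x i - x s)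

theorem prod_Ioi_sub_eq_zero (x : Fin n → R) {i l : Fin n} (h : l < i) :
    ∏ s ∈ Ioi l, (x i - x s) = 0 :=
  prod_eq_zero (mem_Ioi.2 h) (sub_self _)

theorem isUpperTriangular_rowOpMatrix (m : ℕ) (x : Fin n → R) :
    (rowOpMatrix m x).IsUpperTriangular := by
  intro i l (h : l < i)
  simp only [rowOpMatrix, Matrix.of_apply]
  split_ifs
  · exact Matrix.one_apply_ne h.ne'
  · exact prod_Ioi_sub_eq_zero x h

theorem det_rowOpMatrix (m : ℕ) (x : Fin n → R) :
    (rowOpMatrix m x).det = ∏ i : Fin n, ∏ j ∈ Ioi i, if m ≤ (i : ℕ) then x i - x j else 1 := by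
  rw [Matrix.det_of_isUpperTriangular (isUpperTriangular_rowOpMatrix m x)]
  refine prod_congr rfl fun i _ => ?_
  simp only [rowOpMatrix, Matrix.of_apply]
  split_ifs <;> first | omega | simp

theorem rowOpMatrix_mul_apply (m : ℕ) (x : Fin n → R) (A B : Matrix (Fin n) (Fin n) R)
    (hAB : ∀ l : Fin n, m ≤ (l : ℕ) → A l = B l) (i j : Fin n) :
    (rowOpMatrix m x * A) i j =
      if (i : ℕ) < m then A i j else ∑ l, (∏ s ∈ Ioi l, (x i - x s)) * B l j := by
  simp only [Matrix.mul_apply, rowOpMatrix, Matrix.of_apply]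
  split_ifs with hi
  · simp [Matrix.one_apply]
  · refine sum_congr rfl fun l _ => ?_
    by_cases hl : (l : ℕ) < m
    · rw [prod_Ioi_sub_eq_zero x (Fin.lt_def.2 (by omega)), zero_mul, zero_mul]
    · rw [hAB l (by omega)]

end RowOperations

/-- Row-operation form of the Izergin determinant (equation (17) of the paper): for
`0 ≤ m < n`,
`det[(1-t)/((1-xᵢyⱼ)(1-t xᵢyⱼ))] = ∏_{m+1≤i<j≤n} (xᵢ-xⱼ) · det[𝒜_{ij}]`,
where `𝒜_{ij} = (1-t)/((1-xᵢyⱼ)(1-t xᵢyⱼ))` for `i ≤ m` and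
`𝒜_{ij} = Σ_{k≥0} (1-t^{k+1}) h_{k+i-n}(xᵢ,…,xₙ) yⱼᵏ` for `i > m`
(with `h_d = 0` for `d < 0`).  It is stated here for complex values of the variables in a
domain of convergence. -/
theorem det_row_operations (m n : ℕ) (x y : Fin n → ℂ) (t : ℂ)
    (hx : ∀ i, ‖x i‖ < 1 / 8) (hy : ∀ j, ‖y j‖ < 1 / 8) (ht : ‖t‖ < 1) :
    (Matrix.of fun i j : Fin n =>
        (1 - t) / ((1 - x i * y j) * (1 - t * (x i * y j)))).det =
      (∏ i : Fin n, ∏ j ∈ Finset.Ioi i, if m ≤ (i : ℕ) then x i - x j else 1) *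
        (Matrix.of fun i j : Fin n =>
          if (i : ℕ) < m then
            (1 - t) / ((1 - x i * y j) * (1 - t * (x i * y j)))
          else
            ∑' k : ℕ,
              if n ≤ k + (i : ℕ) + 1 then
                (1 - t ^ (k + 1)) *
                  hsym (n - (i : ℕ)) (k + (i : ℕ) + 1 - n)
                    (fun a : Fin (n - (i : ℕ)) =>
                      x ⟨(i : ℕ) + (a : ℕ), by have h1 := a.isLt; have h2 := i.isLt; omega⟩) *
                  y j ^ k
              else 0).det := by
  have hx' : ∀ a, ‖x a‖ ≤ 1 / 2 := fun a => (hx a).le.trans (by norm_num)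
  rw [← det_rowOpMatrix m x, ← Matrix.det_mul]
  congr 1
  ext i j
  rw [rowOpMatrix_mul_apply m x _
    (Matrix.of fun l j => ∑' k, (1 - t ^ (k + 1)) * suffixHsym x k l * y j ^ k), Matrix.of_apply]
  · split_ifs with hi
    · simp [hi]
    · simp only [Matrix.of_apply]
      exact (sum_prod_sub_mul_tsum_suffixHsym x hx' ht ((hy j).trans (by norm_num)) i).symm
  · intro l hl
    funext j
    simp only [Matrix.of_apply, if_neg (not_lt.2 hl), suffixHsym]
    congr 1
    funext k
    split_ifs <;> simp
end
end
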